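/- For every rooted tree T of order n > 1 whose root r has degree (number of children) k, the rank of the root satisfies R_T(r) ≤ ⌊(n−1)/k⌋. Moreover, equality holds if T is a starlike tree S(ℓ_1, ℓ_2, …, ℓ_k) with k ≥ 3, rooted at its unique branching vertex, with min_{1 ≤ i ≤ k} ℓ_i = ⌊(n−1)/k⌋. -/

import Mathlib

/-- Rooted trees: a root together with a (possibly empty) list of subtrees. -/
inductive RTree : Type
  | node : List RTree → RTree

namespace RTree

mutual
  /-- The rank (protection number) of the root of a rooted tree: the minimum
  distance from the root to a leaf descendant.  Leaves have rank `0`. -/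
  def rank : RTree → ℕ
    | .node [] => 0
    | .node (t :: ts) => minRankAux t ts + 1
  termination_by t => sizeOf t
  decreasing_by
    all_goals simp_wf
    all_goals omega
  /-- Minimum of the ranks of `t :: ts`. -/
  def minRankAux : RTree → List RTree → ℕ
    | t, [] => rank t
    | t, s :: ts => min (rank t) (minRankAux s ts)
  termination_by t ts => sizeOf t + sizeOf ts
  decreasing_by
    all_goals simp_wf
    all_goals omega
end

mutual
  /-- The order of a rooted tree: its number of vertices. -/
  def order : RTree → ℕ
    | .node ts => orderList ts + 1
  def orderList : List RTree → ℕ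
    | [] => 0
    | t :: ts => order t + orderList ts
end

mutual
  /-- The security of a rooted tree: the sum of the ranks of all of its vertices. -/
  def security : RTree → ℕ
    | .node ts => rank (.node ts) + securityList ts
  def securityList : List RTree → ℕ
    | [] => 0
    | t :: ts => security t + securityList ts
end

mutual
  /-- The height of a rooted tree: the maximum distance from the root to a leaf. -/
  def height : RTree → ℕ
    | .node [] => 0
    | .node (t :: ts) => maxHeightAux t ts + 1
  termination_by t => sizeOf t
  decreasing_by
    all_goals simp_wf
    all_goals omega
  def maxHeightAux : RTree → List RTree → ℕ
    | t, [] => height t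
    | t, s :: ts => max (height t) (maxHeightAux s ts)
  termination_by t ts => sizeOf t + sizeOf ts
  decreasing_by
    all_goals simp_wf
    all_goals omega
end

mutual
  /-- The outdegree sequence of a rooted tree: the multiset of the numbers of
  children of all of its vertices. -/
  def degSeq : RTree → Multiset ℕ
    | .node ts => ts.length ::ₘ degSeqList ts
  def degSeqList : List RTree → Multiset ℕ
    | [] => 0
    | t :: ts => degSeq t + degSeqList ts
end

/-- The subtree of `T` rooted at the vertex with position `p` (a list of child
indices, read from the root), if such a vertex exists.  The vertices of `T` are
exactly the valid positions; the rank of a vertex in `T` equals the rank (of the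
root) of the subtree of `T` rooted at that vertex. -/
def subtreeAt : List ℕ → RTree → Option RTree
  | [], t => some t
  | i :: is, .node ts => ts[i]?.bind (subtreeAt is)

/-- A rooted path whose root is an end vertex: every vertex has at most one child. -/
def IsPath : RTree → Prop
  | .node [] => True
  | .node [t] => IsPath t
  | .node (_ :: _ :: _) => False

/-- A `k`-ary tree: every vertex has at most `k` children. -/
def IsKary (k : ℕ) (T : RTree) : Prop :=
  ∀ p ts, subtreeAt p T = some (.node ts) → ts.length ≤ k

/-- The rooted path with `n` edges (`n + 1` vertices). -/
def pathTree : ℕ → RTree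
  | 0 => .node []
  | n + 1 => .node [pathTree n]

/-- The starlike tree `S(ℓ₁, …, ℓ_k)`: paths of lengths `ℓ₁, …, ℓ_k` with one end vertex
of each identified to a single vertex, the root. -/
def starlike (ls : List ℕ) : RTree := .node (ls.map (fun l => pathTree (l - 1)))

/-- A rooted complete `k`-ary tree: every non-leaf vertex has exactly `k` children, all
leaves lie on at most two consecutive levels, and at most one vertex has both leaf and
non-leaf children. -/
def IsCompleteKary (k : ℕ) (T : RTree) : Prop :=
  (∀ p ts, subtreeAt p T = some (.node ts) → ts = [] ∨ ts.length = k) ∧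
  T.height ≤ T.rank + 1 ∧
  (∀ p q ts us, subtreeAt p T = some (.node ts) → subtreeAt q T = some (.node us) →
    (∃ c ∈ ts, c = RTree.node []) → (∃ c ∈ ts, c ≠ RTree.node []) →
    (∃ c ∈ us, c = RTree.node []) → (∃ c ∈ us, c ≠ RTree.node []) → p = q)

theorem minRankAux_le_rank :
    ∀ {a b : RTree} {l : List RTree}, b ∈ a :: l → minRankAux a l ≤ rank b
  | _, _, [], hb => by
      rw [List.mem_singleton.mp hb, minRankAux]
  | a, b, c :: l, hb => by
      rw [minRankAux]
      rcases List.mem_cons.mp hb with rfl | hb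
      · exact min_le_left _ _
      · exact (min_le_right _ _).trans (minRankAux_le_rank hb)

theorem le_minRankAux : ∀ {a : RTree} {l : List RTree} {m : ℕ},
    (∀ b ∈ a :: l, m ≤ rank b) → m ≤ minRankAux a l
  | a, [], _, h => by
      rw [minRankAux]
      exact h a List.mem_cons_self
  | a, c :: l, _, h => by
      rw [minRankAux, le_min_iff]
      exact ⟨h a List.mem_cons_self, le_minRankAux fun b hb => h b (List.mem_cons_of_mem a hb)⟩

theorem rank_node_le {ts : List RTree} {b : RTree} (hb : b ∈ ts) :
    rank (node ts) ≤ rank b + 1 := by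
  cases ts with
  | nil => simp at hb
  | cons a l =>
      rw [rank]
      exact Nat.add_le_add_right (minRankAux_le_rank hb) 1

theorem le_rank_node {ts : List RTree} {m : ℕ} (hts : ts ≠ []) (h : ∀ b ∈ ts, m ≤ rank b + 1) :
    m ≤ rank (node ts) := by
  cases ts with
  | nil => exact absurd rfl hts
  | cons a l =>
      rw [rank]
      have : m - 1 ≤ minRankAux a l := le_minRankAux fun b hb => Nat.sub_le_of_le_add (h b hb)
      omega

theorem rank_lt_order : ∀ t : RTree, rank t < order t
  | node [] => by simp [rank, order, orderList]
  | node (a :: l) => by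
      have := rank_lt_order a
      have := rank_node_le (List.mem_cons_self (a := a) (l := l))
      simp only [order, orderList] at *
      omega

theorem orderList_eq_sum : ∀ ts : List RTree, orderList ts = (ts.map order).sum
  | [] => rfl
  | t :: ts => by rw [orderList, orderList_eq_sum ts, List.map_cons, List.sum_cons]

/-- Each child has rank at least `rank (node ts) - 1`, so at least `rank (node ts)` vertices. -/
theorem length_mul_rank_le_orderList (ts : List RTree) :
    ts.length * rank (node ts) ≤ orderList ts := by
  rw [orderList_eq_sum, ← List.length_map (f := order), ← smul_eq_mul]
  refine List.card_nsmul_le_sum _ _ fun x hx => ?_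
  obtain ⟨b, hb, rfl⟩ := List.mem_map.mp hx
  exact (rank_node_le hb).trans (rank_lt_order b)

theorem rank_node_le_div (ts : List RTree) :
    rank (node ts) ≤ (order (node ts) - 1) / ts.length := by
  by_cases hts : ts = []
  · simp [hts, rank]
  rw [Nat.le_div_iff_mul_le (List.length_pos_iff.mpr hts), order, Nat.add_sub_cancel, mul_comm]
  exact length_mul_rank_le_orderList ts

theorem rank_pathTree : ∀ m : ℕ, rank (pathTree m) = m
  | 0 => by simp [pathTree, rank]
  | m + 1 => by
      show rank (node [pathTree m]) = m + 1
      rw [rank, minRankAux, rank_pathTree m]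

theorem le_rank_starlike {ls : List ℕ} {q : ℕ} (hls : ls ≠ []) (h : ∀ l ∈ ls, q ≤ l) :
    q ≤ rank (starlike ls) := by
  refine le_rank_node (by simpa using hls) fun b hb => ?_
  obtain ⟨l, hl, rfl⟩ := List.mem_map.mp hb
  rw [rank_pathTree]
  have := h l hl
  omega

end RTree

open RTree in
/-- For a rooted tree `T` of order `n > 1` whose root has `k` children,
`R_T(r) ≤ ⌊(n−1)/k⌋`; moreover equality holds if `T` is a starlike tree
`S(ℓ₁, …, ℓ_k)` with `k ≥ 3`, rooted at its unique branching vertex, with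
`min ℓᵢ = ⌊(n−1)/k⌋`. -/
theorem root_rank_le_of_root_degree (n k : ℕ) (T : RTree) (ts : List RTree)
    (hT : T = .node ts) (hn : T.order = n) (hn1 : 1 < n) (hk : ts.length = k) :
    T.rank ≤ (n - 1) / k ∧
      (∀ ls : List ℕ, T = starlike ls → ls.length = k → 3 ≤ k →
        (∀ l ∈ ls, 1 ≤ l) →
        (∀ l ∈ ls, (n - 1) / k ≤ l) → (∃ l ∈ ls, l = (n - 1) / k) →
        T.rank = (n - 1) / k) := by
  subst hT hn hk
  refine ⟨rank_node_le_div ts, fun ls hstar _ _ _ hlow ⟨_, hl, _⟩ => ?_⟩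
  exact le_antisymm (rank_node_le_div ts)
    ((le_rank_starlike (List.ne_nil_of_mem hl) hlow).trans_eq (congrArg rank hstar).symm)
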